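/- For integers 1 ≤ d ≤ k, C(k,d) is a core if and only if k and d are relatively prime. -/

import Mathlib

/-!
If `g = gcd(k, d) > 1`, collapsing each block `{g q, …, g q + g - 1}` onto `g q` is a non-injective
acyclic self-homomorphism of `C(k,d)`: arcs inside a block all point downwards, and since `g ∣ d` an
arc between blocks is still long enough after rounding its endpoints down to multiples of `g`.

Conversely, the vertices that `x` does not dominate form the window `x, x + 1, …, x + d - 1`, so an
acyclic set, which has a sink, has at most `d` vertices. For an acyclic self-homomorphism `φ` the
preimage of a window is acyclic, so with `N y = |φ⁻¹(y)|` every window sum of `N` is at most `d`;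
these sums add up to `d k`, so all of them equal `d`. Comparing consecutive windows gives
`N (x + d) = N x`, and as `d` generates `ℤ_k`, `N` is constant, hence identically `1`.
-/

/-- Induced (restricted) arc relation on a vertex set `S`. -/
def Restrict {V : Type*} (A : V → V → Prop) (S : Set V) : V → V → Prop :=
  fun u v => u ∈ S ∧ v ∈ S ∧ A u v

/-- A digraph (arc relation) is acyclic if it has no directed cycle,
i.e. no vertex reaches itself by a nonempty directed walk. -/
def IsAcyclic {V : Type*} (A : V → V → Prop) : Prop :=
  ∀ v, ¬ Relation.TransGen A v v

/-- The subdigraph induced by `S` is acyclic. -/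
def AcyclicOn {V : Type*} (A : V → V → Prop) (S : Set V) : Prop :=
  IsAcyclic (Restrict A S)

/-- Acyclic homomorphism of digraphs. -/
def IsAcyclicHom {V W : Type*} (A : V → V → Prop) (B : W → W → Prop) (φ : V → W) : Prop :=
  (∀ w : W, AcyclicOn A (φ ⁻¹' {w})) ∧ ∀ u v, A u v → φ u = φ v ∨ B (φ u) (φ v)

/-- Automorphism of a digraph. -/
def IsDigraphAuto {W : Type*} (B : W → W → Prop) (π : W ≃ W) : Prop :=
  ∀ u v, B u v ↔ B (π u) (π v)

/-- `D` (with arcs `A`) is uniquely `C`-colourable (`C` with arcs `B`). -/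
def UniquelyColourable {V W : Type*} (A : V → V → Prop) (B : W → W → Prop) : Prop :=
  (∃ φ : V → W, IsAcyclicHom A B φ ∧ Function.Surjective φ) ∧
  ∀ φ ψ : V → W, IsAcyclicHom A B φ → IsAcyclicHom A B ψ →
    ∃ π : W ≃ W, IsDigraphAuto B π ∧ φ = ⇑π ∘ ψ

/-- Acyclic-sink set: induces an acyclic subdigraph and emits no arcs. -/
def IsAcyclicSink {V : Type*} (A : V → V → Prop) (S : Set V) : Prop :=
  AcyclicOn A S ∧ ∀ u ∈ S, ∀ v ∉ S, ¬ A u v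

/-- The circular digraph `C(k,d)` on `ℤ_k`: arc `i → j` iff `(j - i) mod k ∈ {d, …, k-1}`. -/
def CircArc (k d : ℕ) : Fin k → Fin k → Prop :=
  fun i j => d ≤ (j.val + k - i.val) % k

/-- There is a directed cycle of length `ℓ`. -/
def HasCycleOfLength {V : Type*} (A : V → V → Prop) (ℓ : ℕ) : Prop :=
  ∃ l : List V, l.length = ℓ ∧ l.Nodup ∧ List.Chain' A l ∧
    ∀ h : l ≠ [], A (l.getLast h) (l.head h)

open Finset Function
open Fin.NatCast Fin.CommRing

section Acyclic

variable {V W : Type*} {A : V → V → Prop} {S : Set V}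

theorem acyclicOn_of_lt {β : Type*} [Preorder β] (p : V → β)
    (hp : ∀ u ∈ S, ∀ v ∈ S, A u v → p v < p u) : AcyclicOn A S := by
  have key : ∀ u v, Relation.TransGen (Restrict A S) u v → p v < p u := by
    intro u v h
    induction h with
    | single huv => exact hp _ huv.1 _ huv.2.1 huv.2.2
    | tail _ hbc ih => exact (hp _ hbc.1 _ hbc.2.1 hbc.2.2).trans ih
  exact fun v hv => lt_irrefl _ (key v v hv)

theorem AcyclicOn.exists_sink [Finite V] (h : AcyclicOn A S) (hS : S.Nonempty) :
    ∃ x ∈ S, ∀ y ∈ S, ¬ A x y := by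
  let r : V → V → Prop := flip (Relation.TransGen (Restrict A S))
  have : IsTrans V r := ⟨fun _ _ _ hab hbc => hbc.trans hab⟩
  have : Std.Irrefl r := ⟨h⟩
  obtain ⟨x, hxS, hmin⟩ := (Finite.wellFounded_of_trans_of_irrefl r).has_min S hS
  exact ⟨x, hxS, fun y hyS hxy => hmin y hyS (.single ⟨hxS, hyS, hxy⟩)⟩

theorem AcyclicOn.preimage {B : W → W → Prop} {φ : V → W} (hφ : IsAcyclicHom A B φ)
    {T : Set W} (hT : AcyclicOn B T) : AcyclicOn A (φ ⁻¹' T) := by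
  -- A closed walk in `φ ⁻¹' T` either stays in one fibre or maps onto a closed walk in `T`.
  have key : ∀ u v, Relation.TransGen (Restrict A (φ ⁻¹' T)) u v →
      Relation.TransGen (Restrict B T) (φ u) (φ v) ∨
        φ u = φ v ∧ Relation.TransGen (Restrict A (φ ⁻¹' {φ u})) u v := by
    intro u v h
    induction h with
    | single huv =>
      rcases hφ.2 _ _ huv.2.2 with heq | harc
      · exact .inr ⟨heq, .single ⟨rfl, heq.symm, huv.2.2⟩⟩
      · exact .inl (.single ⟨huv.1, huv.2.1, harc⟩)
    | @tail b c _ hbc ih =>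
      rcases hφ.2 _ _ hbc.2.2 with heq | harc
      · rcases ih with hwalk | ⟨hub, hfib⟩
        · exact .inl (heq ▸ hwalk)
        · exact .inr ⟨hub.trans heq, hfib.tail ⟨hub.symm, (hub.trans heq).symm, hbc.2.2⟩⟩
      · have hBc : Relation.TransGen (Restrict B T) (φ b) (φ c) := .single ⟨hbc.1, hbc.2.1, harc⟩
        rcases ih with hwalk | ⟨hub, -⟩
        · exact .inl (hwalk.trans hBc)
        · exact .inl (hub ▸ hBc)
  intro v hv
  rcases key v v hv with hwalk | ⟨-, hfib⟩
  · exact hT _ hwalk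
  · exact hφ.1 _ v hfib

end Acyclic

section Window

variable {G M : Type*}

theorem sum_sum_range_add [AddGroupWithOne G] [Fintype G] [AddCommMonoid M] (f : G → M)
    (d : ℕ) : ∑ x, ∑ j ∈ range d, f (x + j) = d • ∑ x, f x := by
  calc ∑ x, ∑ j ∈ range d, f (x + j) = ∑ j ∈ range d, ∑ x, f x :=
        sum_comm.trans (sum_congr rfl fun j _ => Equiv.sum_comp (Equiv.addRight (j : G)) f)
    _ = d • ∑ x, f x := by rw [sum_const, card_range]

theorem periodic_of_sum_range_add_eq [AddCommMonoidWithOne G] [AddCancelCommMonoid M]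
    {f : G → M} {d : ℕ} {c : M} (h : ∀ x, ∑ j ∈ range d, f (x + j) = c) :
    Periodic f d := by
  intro x
  have hshift : ∀ j : ℕ, x + ((j + 1 : ℕ) : G) = x + 1 + j := fun j => by push_cast; abel
  have hsucc := sum_range_succ (fun j => f (x + j)) d
  rw [sum_range_succ', h] at hsucc
  simp only [hshift, h, Nat.cast_zero, add_zero] at hsucc
  exact (add_left_cancel hsucc).symm

end Window

theorem Function.Periodic.eq_of_coprime {k d : ℕ} [NeZero k] {α : Type*} {f : Fin k → α}
    (hf : Periodic f (d : Fin k)) (hcop : k.Coprime d) (x y : Fin k) : f x = f y := by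
  have hord : addOrderOf (1 : Fin k) = k := CharP.eq _ (CharP.addOrderOf_one _) inferInstance
  obtain ⟨m, hm⟩ := exists_nsmul_eq_self_of_coprime (x := (1 : Fin k)) (hord ▸ hcop.symm)
  rw [nsmul_one] at hm
  have hf1 : Periodic f 1 := hm ▸ hf.nsmul m
  simpa using (hf1.nsmul (y - x).val x).symm

section Circular

variable {k d : ℕ}

theorem circArc_iff {i j : Fin k} : CircArc k d i j ↔ d ≤ (j - i).val := by
  rw [CircArc, Fin.val_sub, Nat.add_sub_assoc i.isLt.le, Nat.add_comm]

variable [NeZero k]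

theorem card_le_of_acyclicOn_circArc {S : Finset (Fin k)} (hS : AcyclicOn (CircArc k d) ↑S) :
    #S ≤ d := by
  rcases S.eq_empty_or_nonempty with rfl | hne
  · simp
  obtain ⟨x, -, hsink⟩ := hS.exists_sink (coe_nonempty.2 hne)
  -- The non-out-neighbours of `x` form the window `x, x + 1, …, x + d - 1`.
  calc #S ≤ #(range d) := by
        refine card_le_card_of_injOn (fun v => (v - x).val) (fun v hv => ?_) ?_
        · simpa [circArc_iff] using hsink v hv
        · intro v _ w _ hvw
          exact sub_left_injective (Fin.ext hvw : v - x = w - x)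
    _ = d := card_range d

theorem acyclicOn_window (x : Fin k) : AcyclicOn (CircArc k d) {y | (y - x).val < d} := by
  refine acyclicOn_of_lt (fun y => (y - x).val)
    fun u (hu : (u - x).val < d) v (hv : (v - x).val < d) huv => ?_
  rw [circArc_iff, ← sub_sub_sub_cancel_right v u x] at huv
  by_contra! hle
  have := Fin.coe_sub_iff_le.2 hle
  omega

theorem card_filter_sub_val_lt {V : Type*} [Fintype V] (hdk : d ≤ k) (φ : V → Fin k)
    (x : Fin k) : #{v | (φ v - x).val < d} = ∑ j ∈ range d, #{v | φ v = x + j} := by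
  rw [card_eq_sum_card_fiberwise (f := fun v => (φ v - x).val) (t := range d)
    (fun v hv => by simpa using hv)]
  refine sum_congr rfl fun j hj => congrArg card (Finset.ext fun v => ?_)
  have hjk : j < k := (mem_range.1 hj).trans_le hdk
  simp only [mem_filter, mem_univ, true_and]
  rw [← sub_eq_iff_eq_add', Fin.ext_iff, Fin.val_natCast, Nat.mod_eq_of_lt hjk]
  exact ⟨And.right, fun h => ⟨h ▸ mem_range.1 hj, h⟩⟩

theorem eq_one_of_sum_range_add_le (hcop : k.Coprime d) {f : Fin k → ℕ} (hsum : ∑ x, f x = k)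
    (hwin : ∀ x, ∑ j ∈ range d, f (x + j) ≤ d) (x : Fin k) : f x = 1 := by
  have hwin_eq : ∀ x, ∑ j ∈ range d, f (x + j) = d := by
    have htotal : ∑ x, ∑ j ∈ range d, f (x + j) = ∑ _x : Fin k, d := by
      rw [sum_sum_range_add, hsum, sum_const, card_univ, Fintype.card_fin, smul_eq_mul,
        smul_eq_mul, mul_comm]
    exact fun x => (sum_eq_sum_iff_of_le fun x _ => hwin x).1 htotal x (mem_univ x)
  have hconst := (periodic_of_sum_range_add_eq hwin_eq).eq_of_coprime hcop
  have hk : k * f x = k * 1 :=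
    calc k * f x = ∑ _y : Fin k, f x := by
          rw [sum_const, card_univ, Fintype.card_fin, smul_eq_mul]
      _ = ∑ y, f y := Fintype.sum_congr _ _ fun y => hconst x y
      _ = k * 1 := by rw [hsum, mul_one]
  exact Nat.eq_of_mul_eq_mul_left (Nat.pos_of_neZero k) hk

theorem injective_of_isAcyclicHom_circArc (hdk : d ≤ k) (hcop : k.Coprime d) {φ : Fin k → Fin k}
    (hφ : IsAcyclicHom (CircArc k d) (CircArc k d) φ) : Injective φ := by
  have hwin : ∀ x, ∑ j ∈ range d, #{v | φ v = x + j} ≤ d := fun x => by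
    rw [← card_filter_sub_val_lt hdk]
    apply card_le_of_acyclicOn_circArc
    simpa using (acyclicOn_window x).preimage hφ
  have hsum : ∑ y, #{v | φ v = y} = k := by
    rw [← card_eq_sum_card_fiberwise (fun v _ => mem_univ (φ v)), card_univ, Fintype.card_fin]
  intro a b hab
  exact card_le_one.1 (eq_one_of_sum_range_add_le hcop hsum hwin (φ b)).le a (by simp [hab]) b
    (by simp)

end Circular

theorem Int.emod_sub_eq_zero_or_le_of_dvd {k g d a b a' b' : ℤ} (hk : 0 < k) (hgk : g ∣ k)
    (hgd : g ∣ d) (ha' : g ∣ a') (hb' : g ∣ b') (ha : a' ≤ a) (ha_lt : a < a' + g) (hb : b' ≤ b)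
    (hb_lt : b < b' + g) (h : d ≤ (b - a) % k) : (b' - a') % k = 0 ∨ d ≤ (b' - a') % k := by
  set e := (b' - a') % k with he
  by_contra! hne
  have he0 : 0 < e := (Int.emod_nonneg _ hk.ne').lt_of_ne' hne.1
  have hge : g ∣ e := by
    rw [he, Int.emod_def]
    exact dvd_sub (dvd_sub hb' ha') (hgk.mul_right _)
  have hg_le : g ≤ e := Int.le_of_dvd he0 hge
  have hed : e + g ≤ d := by
    have := Int.le_of_dvd (sub_pos.2 hne.2) (dvd_sub hgd hge)
    linarith
  -- `b - a` differs from `e` by less than `g` modulo `k`, so its residue is `e + (b - b') - (a - a')`.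
  have hrepr : b - a = e + (b - b') - (a - a') + k * ((b' - a') / k) := by
    have := Int.mul_ediv_add_emod (b' - a') k
    linarith
  have hek : e + g ≤ k := by
    have := Int.le_of_dvd (sub_pos.2 (Int.emod_lt_of_pos _ hk)) (dvd_sub hgk hge)
    linarith
  rw [hrepr, Int.add_mul_emod_self_left, Int.emod_eq_of_lt (by linarith) (by linarith)] at h
  linarith

theorem Fin.natCast_val_sub {k : ℕ} (a b : Fin k) :
    (((b - a : Fin k) : ℕ) : ℤ) = ((b : ℤ) - a) % k := by
  rw [Fin.val_sub, Int.natCast_mod, Nat.cast_add, Nat.cast_sub a.isLt.le,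
    show (k : ℤ) - a + b = b - a + k * 1 by ring, Int.add_mul_emod_self_left]

section Block

variable {k d g : ℕ}

def blockMap (g : ℕ) (i : Fin k) : Fin k := ⟨i / g * g, (Nat.div_mul_le_self i g).trans_lt i.isLt⟩

theorem acyclicOn_blockMap_fiber (hg : 0 < g) (hgd : g ≤ d) (w : Fin k) :
    AcyclicOn (CircArc k d) (blockMap g ⁻¹' {w}) := by
  refine acyclicOn_of_lt Fin.val fun u hu v hv huv => ?_
  have hq : u / g = v / g := by
    have := congrArg Fin.val (hu.trans hv.symm)
    simp only [blockMap] at this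
    exact Nat.eq_of_mul_eq_mul_right hg this
  by_contra! hle
  rw [circArc_iff, Fin.coe_sub_iff_le.2 hle] at huv
  have h1 := Nat.lt_div_mul_add (a := v.val) hg
  have h2 := Nat.div_mul_le_self u.val g
  rw [← hq] at h1
  omega

theorem circArc_blockMap [NeZero k] (hgk : g ∣ k) (hgd : g ∣ d) {u v : Fin k}
    (huv : CircArc k d u v) :
    blockMap g u = blockMap g v ∨ CircArc k d (blockMap g u) (blockMap g v) := by
  have hg : 0 < g := Nat.pos_of_dvd_of_pos hgk (Nat.pos_of_neZero k)
  have hdvd (i : Fin k) : (g : ℤ) ∣ (blockMap g i : ℕ) :=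
    Int.natCast_dvd_natCast.2 (Nat.dvd_mul_left g _)
  have hle (i : Fin k) : ((blockMap g i : ℕ) : ℤ) ≤ i := by
    exact_mod_cast Nat.div_mul_le_self i g
  have hlt (i : Fin k) : (i : ℤ) < (blockMap g i : ℕ) + g := by
    exact_mod_cast Nat.lt_div_mul_add hg
  rw [circArc_iff, ← Nat.cast_le (α := ℤ), Fin.natCast_val_sub] at huv ⊢
  rw [eq_comm, ← sub_eq_zero, Fin.ext_iff, ← Nat.cast_inj (R := ℤ), Fin.natCast_val_sub,
    Fin.val_zero, Nat.cast_zero]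
  exact Int.emod_sub_eq_zero_or_le_of_dvd (by exact_mod_cast Nat.pos_of_neZero k)
    (Int.natCast_dvd_natCast.2 hgk) (Int.natCast_dvd_natCast.2 hgd) (hdvd u) (hdvd v)
    (hle u) (hlt u) (hle v) (hlt v) huv

theorem isAcyclicHom_blockMap [NeZero k] (hgk : g ∣ k) (hgd : g ∣ d) (hd : 0 < d) :
    IsAcyclicHom (CircArc k d) (CircArc k d) (blockMap g) :=
  ⟨acyclicOn_blockMap_fiber (Nat.pos_of_dvd_of_pos hgk (Nat.pos_of_neZero k))
    (Nat.le_of_dvd hd hgd), fun _ _ => circArc_blockMap hgk hgd⟩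

theorem not_injective_blockMap (hg : 2 ≤ g) (hgk : g ≤ k) :
    ¬ Injective (blockMap g : Fin k → Fin k) := fun hinj => by
  have h01 := @hinj ⟨0, by omega⟩ ⟨1, by omega⟩
    (Fin.ext (by simp [blockMap, Nat.div_eq_of_lt hg]))
  simp at h01

end Block

theorem circ_core_iff_coprime (k d : ℕ) (hd : 1 ≤ d) (hk : d ≤ k) :
    (∀ φ : Fin k → Fin k, IsAcyclicHom (CircArc k d) (CircArc k d) φ →
        Function.Bijective φ) ↔ Nat.Coprime k d := by
  have : NeZero k := ⟨by omega⟩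
  refine ⟨fun hcore => ?_, fun hcop φ hφ =>
    (injective_of_isAcyclicHom_circArc hk hcop hφ).bijective_of_finite⟩
  by_contra hnc
  have hg : 2 ≤ k.gcd d := by
    have := Nat.gcd_pos_of_pos_right k hd
    have : k.gcd d ≠ 1 := hnc
    omega
  exact not_injective_blockMap hg (Nat.gcd_le_left d (by omega))
    (hcore _ (isAcyclicHom_blockMap (Nat.gcd_dvd_left k d) (Nat.gcd_dvd_right k d) hd)).1
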